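/- Let p ≥ 0 and 0 < α < 1. For nonnegative reals (β_{I'}) indexed by dyadic intervals of the circle with ∑_{I'} β_{I'} (log(1/|I'|))^p < ∞, define Δ(I) = ∑_{I' dyadic ⊂ I} β_{I'} (|I'|/|I|)^α. Then ∑_{I dyadic} Δ(I) (log(1/|I|))^p < ∞. -/

import Mathlib

open ENNReal

/-- A dyadic arc of the circle (modeled as `[0,1)`): level `n`, position `k < 2^n`. -/
structure DyadicArc where
  n : ℕ
  k : ℕ
  hk : k < 2 ^ n

namespace DyadicArc

/-- The underlying interval `[k/2^n, (k+1)/2^n)`. -/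
noncomputable def set (I : DyadicArc) : Set ℝ :=
  Set.Ico ((I.k : ℝ) / 2 ^ I.n) (((I.k : ℝ) + 1) / 2 ^ I.n)

/-- The length `2^{-n}` as a real number. -/
noncomputable def len (I : DyadicArc) : ℝ := (1 / 2 : ℝ) ^ I.n

/-- The length `2^{-n}` as an extended nonnegative real. -/
noncomputable def lenE (I : DyadicArc) : ℝ≥0∞ := (1 / 2 : ℝ≥0∞) ^ I.n

end DyadicArc

/-!
Exchanging the order of summation, each `β J` gets multiplied by a sum over the ancestors `I`
of `J`. An arc has at most one ancestor per level, so this is at most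
`∑ₖ 2^{-αk} w(J.n - k) ≤ (1 - 2^{-α})⁻¹ w(J.n)` for the nondecreasing weight
`w n = (n log 2)^p = (log (1/|I|))^p` of a level-`n` arc `I`.
-/

namespace DyadicArc

lemma log_one_div_len (I : DyadicArc) : Real.log (1 / I.len) = I.n * Real.log 2 := by
  rw [len, one_div, ← inv_pow, one_div, inv_inv, Real.log_pow]

lemma right_sub_left (I : DyadicArc) :
    ((I.k : ℝ) + 1) / 2 ^ I.n - I.k / 2 ^ I.n = I.len := by
  rw [← sub_div, add_sub_cancel_left, len, one_div_pow]

lemma left_mem_set (I : DyadicArc) : (I.k : ℝ) / 2 ^ I.n ∈ I.set :=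
  ⟨le_rfl, by rw [← sub_pos, right_sub_left, len]; positivity⟩

lemma n_le_of_set_subset {I J : DyadicArc} (h : J.set ⊆ I.set) : I.n ≤ J.n := by
  rw [set, set, Set.Ico_subset_Ico_iff (Set.nonempty_Ico.mp ⟨_, J.left_mem_set⟩)] at h
  have hlen : J.len ≤ I.len := by
    rw [← right_sub_left, ← right_sub_left]
    exact sub_le_sub h.2 h.1
  exact (pow_le_pow_iff_right_of_lt_one₀ (by norm_num) (by norm_num)).mp hlen

lemma eq_of_n_eq_of_mem {I₁ I₂ : DyadicArc} {x : ℝ} (hn : I₁.n = I₂.n)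
    (h₁ : x ∈ I₁.set) (h₂ : x ∈ I₂.set) : I₁ = I₂ := by
  obtain ⟨n, k₁, _⟩ := I₁
  obtain ⟨n₂, k₂, _⟩ := I₂
  obtain rfl : n = n₂ := hn
  have hpos : (0 : ℝ) < 2 ^ n := by positivity
  have hlt₁ : (k₁ : ℝ) < k₂ + 1 :=
    (div_lt_div_iff_of_pos_right hpos).mp (h₁.1.trans_lt h₂.2)
  have hlt₂ : (k₂ : ℝ) < k₁ + 1 :=
    (div_lt_div_iff_of_pos_right hpos).mp (h₂.1.trans_lt h₁.2)
  obtain rfl : k₁ = k₂ := by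
    have : k₁ < k₂ + 1 := by exact_mod_cast hlt₁
    have : k₂ < k₁ + 1 := by exact_mod_cast hlt₂
    omega
  rfl

lemma lenE_div_lenE_rpow {I J : DyadicArc} (h : I.n ≤ J.n) (α : ℝ) :
    (J.lenE / I.lenE) ^ α = ((1 / 2 : ℝ≥0∞) ^ α) ^ (J.n - I.n) := by
  have hJ : J.lenE = (1 / 2 : ℝ≥0∞) ^ (J.n - I.n) * I.lenE := by
    rw [lenE, lenE, ← pow_add, Nat.sub_add_cancel h]
  rw [hJ, ENNReal.mul_div_cancel_right (by simp [lenE]) (by simp [lenE]),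
    ← ENNReal.rpow_natCast, ← ENNReal.rpow_mul, mul_comm, ENNReal.rpow_mul,
    ENNReal.rpow_natCast]

theorem tsum_ancestors_le {w : ℕ → ℝ≥0∞} (hw : Monotone w) (α : ℝ) (J : DyadicArc) :
    ∑' I : {I : DyadicArc // J.set ⊆ I.set}, (J.lenE / I.1.lenE) ^ α * w I.1.n ≤
      (1 - (1 / 2 : ℝ≥0∞) ^ α)⁻¹ * w J.n := by
  set r : ℝ≥0∞ := (1 / 2 : ℝ≥0∞) ^ α
  have hdepth_inj :
      Function.Injective fun I : {I : DyadicArc // J.set ⊆ I.set} ↦ J.n - I.1.n := by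
    rintro ⟨I₁, h₁⟩ ⟨I₂, h₂⟩ hdepth
    have hn : I₁.n = I₂.n := by
      have := n_le_of_set_subset h₁
      have := n_le_of_set_subset h₂
      simp only at hdepth
      omega
    exact Subtype.ext (eq_of_n_eq_of_mem hn (h₁ J.left_mem_set) (h₂ J.left_mem_set))
  calc _ ≤ ∑' k : ℕ, r ^ k * w J.n := by
        refine ENNReal.summable.tsum_le_tsum_of_inj _ hdepth_inj (fun _ _ ↦ zero_le) ?_
          ENNReal.summable
        rintro ⟨I, hI⟩
        rw [lenE_div_lenE_rpow (n_le_of_set_subset hI)]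
        exact mul_le_mul_right (hw (n_le_of_set_subset hI)) _
    _ = (1 - r)⁻¹ * w J.n := by rw [ENNReal.tsum_mul_right, ENNReal.tsum_geometric]

theorem tsum_descendants_le_tsum_ancestors (f : DyadicArc → DyadicArc → ℝ≥0∞) :
    ∑' I : {I : DyadicArc // 1 ≤ I.n}, ∑' J : {J : DyadicArc // J.set ⊆ I.1.set}, f I J ≤
      ∑' J : {J : DyadicArc // 1 ≤ J.n}, ∑' I : {I : DyadicArc // J.1.set ⊆ I.set},
        f I J := by
  rw [← ENNReal.tsum_sigma' fun x : Σ I : {I : DyadicArc // 1 ≤ I.n},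
        {J : DyadicArc // J.set ⊆ I.1.set} ↦ f x.1 x.2,
    ← ENNReal.tsum_sigma' fun x : Σ J : {J : DyadicArc // 1 ≤ J.n},
        {I : DyadicArc // J.1.set ⊆ I.set} ↦ f x.2 x.1]
  refine ENNReal.summable.tsum_le_tsum_of_inj
    (fun x ↦ ⟨⟨x.2, x.1.2.trans (n_le_of_set_subset x.2.2)⟩, ⟨x.1, x.2.2⟩⟩) ?_
    (fun _ _ ↦ zero_le) (fun _ ↦ le_rfl) ENNReal.summable
  rintro ⟨⟨I₁, _⟩, ⟨J₁, _⟩⟩ ⟨⟨I₂, _⟩, ⟨J₂, _⟩⟩ h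
  simp only [Sigma.mk.injEq, Subtype.mk.injEq] at h
  obtain ⟨rfl, h⟩ := h
  cases (Subtype.heq_iff_coe_eq (fun _ ↦ Iff.rfl)).mp h
  rfl

theorem tsum_tsum_descendants_mul_le {w : ℕ → ℝ≥0∞} (hw : Monotone w) (α : ℝ)
    (β : DyadicArc → ℝ≥0∞) :
    ∑' I : {I : DyadicArc // 1 ≤ I.n},
        (∑' J : {J : DyadicArc // J.set ⊆ I.1.set}, β J * (J.1.lenE / I.1.lenE) ^ α) *
          w I.1.n ≤
      (1 - (1 / 2 : ℝ≥0∞) ^ α)⁻¹ *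
        ∑' J : {J : DyadicArc // 1 ≤ J.n}, β J * w J.1.n := by
  calc _ = ∑' I : {I : DyadicArc // 1 ≤ I.n}, ∑' J : {J : DyadicArc // J.set ⊆ I.1.set},
          β J * ((J.1.lenE / I.1.lenE) ^ α * w I.1.n) := by
        simp_rw [← ENNReal.tsum_mul_right, mul_assoc]
    _ ≤ ∑' J : {J : DyadicArc // 1 ≤ J.n}, ∑' I : {I : DyadicArc // J.1.set ⊆ I.set},
          β J * ((J.1.lenE / I.1.lenE) ^ α * w I.1.n) :=
        tsum_descendants_le_tsum_ancestors fun I J ↦ β J * ((J.lenE / I.lenE) ^ α * w I.n)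
    _ ≤ ∑' J : {J : DyadicArc // 1 ≤ J.n},
          β J * ((1 - (1 / 2 : ℝ≥0∞) ^ α)⁻¹ * w J.1.n) := by
        simp_rw [ENNReal.tsum_mul_left]
        gcongr with J
        exact tsum_ancestors_le hw α J
    _ = _ := by
        rw [← ENNReal.tsum_mul_left]
        simp_rw [mul_left_comm]

end DyadicArc

theorem stmt_19_general (p α : ℝ) (hp : 0 ≤ p) (hα0 : 0 < α)
    (β : DyadicArc → ℝ≥0∞)
    (hβ : (∑' I' : {I' : DyadicArc // 1 ≤ I'.n},
        β I' * ENNReal.ofReal ((Real.log (1 / (I' : DyadicArc).len)) ^ p)) ≠ ⊤) :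
    (∑' I : {I : DyadicArc // 1 ≤ I.n},
      (∑' I' : {I' : DyadicArc // DyadicArc.set I' ⊆ DyadicArc.set (I : DyadicArc)},
          β I' * ((I' : DyadicArc).lenE / (I : DyadicArc).lenE) ^ α) *
        ENNReal.ofReal ((Real.log (1 / (I : DyadicArc).len)) ^ p)) ≠ ⊤ := by
  have hw : Monotone fun n : ℕ ↦ ENNReal.ofReal ((n * Real.log 2) ^ p) := fun a b hab ↦
    ENNReal.ofReal_le_ofReal (Real.rpow_le_rpow (by positivity) (by gcongr) hp)
  have hC : (1 - (1 / 2 : ℝ≥0∞) ^ α)⁻¹ ≠ ⊤ := by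
    simpa [ENNReal.inv_ne_top, tsub_eq_zero_iff_le] using ENNReal.rpow_lt_one (by norm_num) hα0
  simp only [DyadicArc.log_one_div_len] at hβ ⊢
  exact ne_top_of_le_ne_top (ENNReal.mul_ne_top hC hβ)
    (DyadicArc.tsum_tsum_descendants_mul_le hw α β)

/-- For `p ≥ 0`, `0 < α < 1`, and nonnegative weights `β_{I'}` on dyadic intervals of the
circle (of length ≤ 1/2) with `∑_{I'} β_{I'} (log(1/|I'|))^p < ∞`, setting
`Δ(I) = ∑_{I' ⊂ I} β_{I'} (|I'|/|I|)^α`, one has `∑_I Δ(I)(log(1/|I|))^p < ∞`. -/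
theorem stmt_19 (p α : ℝ) (hp : 0 ≤ p) (hα0 : 0 < α) (hα1 : α < 1)
    (β : DyadicArc → ℝ≥0∞)
    (hβ : (∑' I' : {I' : DyadicArc // 1 ≤ I'.n},
        β I' * ENNReal.ofReal ((Real.log (1 / (I' : DyadicArc).len)) ^ p)) ≠ ⊤) :
    (∑' I : {I : DyadicArc // 1 ≤ I.n},
      (∑' I' : {I' : DyadicArc // DyadicArc.set I' ⊆ DyadicArc.set (I : DyadicArc)},
          β I' * ((I' : DyadicArc).lenE / (I : DyadicArc).lenE) ^ α) *
        ENNReal.ofReal ((Real.log (1 / (I : DyadicArc).len)) ^ p)) ≠ ⊤ :=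
  stmt_19_general p α hp hα0 β hβ
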